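/- As formal power series in q: Σ_{n≥1} (1/(q;q)_∞ − 1/(q;q)_n) · Σ_{i=1}^{n} q^i/(1−q^i) = Σ_{n≥1} (p_2(n) − n·p(n) − N_2(n)/2) q^n. -/

import Mathlib

open Finset PowerSeries

noncomputable section

/-- number of partitions of `n` -/
def pp (n : ℕ) : ℕ := Fintype.card (Nat.Partition n)

/-- number of partitions of `n` with exactly `m` parts -/
def pmn (m n : ℕ) : ℕ :=
  ((univ : Finset (Nat.Partition n)).filter fun l => l.parts.card = m).card

/-- `p_2(n) = Σ_m m² p(m,n)` (parts count is at most `n`) -/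
def p2 (n : ℕ) : ℕ := ∑ m ∈ range (n + 1), m ^ 2 * pmn m n

/-- rank = largest part − number of parts -/
def rank {n : ℕ} (l : Nat.Partition n) : ℤ := (l.parts.sup : ℤ) - l.parts.card

/-- number of partitions of `n` with rank `m` -/
def Nrank (m : ℤ) (n : ℕ) : ℕ :=
  ((univ : Finset (Nat.Partition n)).filter fun l => rank l = m).card

/-- second rank moment (rank of a partition of `n` lies in `[-n,n]`) -/
def N2 (n : ℕ) : ℤ := ∑ m ∈ Finset.Icc (-(n : ℤ)) n, m ^ 2 * Nrank m n

/-- Andrews–Garvan crank -/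
def crank {n : ℕ} (l : Nat.Partition n) : ℤ :=
  if l.parts.count 1 = 0 then (l.parts.sup : ℤ)
  else ((l.parts.filter fun a => l.parts.count 1 < a).card : ℤ) - l.parts.count 1

/-- number of partitions of `n` with crank `m`, with the usual convention for `n = 1` -/
def Mcrank (m : ℤ) (n : ℕ) : ℤ :=
  if n = 1 then (if m = 0 then -1 else if m = 1 ∨ m = -1 then 1 else 0)
  else (((univ : Finset (Nat.Partition n)).filter fun l => crank l = m).card : ℤ)

/-- second crank moment -/
def M2 (n : ℕ) : ℤ := ∑ m ∈ Finset.Icc (-(n : ℤ)) n, m ^ 2 * Mcrank m n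

def smallestPart {n : ℕ} (l : Nat.Partition n) : ℕ := sInf {a | a ∈ l.parts}

/-- total number of appearances of the smallest part in all partitions of `n` -/
def spt (n : ℕ) : ℕ := ∑ l : Nat.Partition n, l.parts.count (smallestPart l)

def d (n : ℕ) : ℕ := n.divisors.card
def sigma1 (n : ℕ) : ℕ := ∑ k ∈ n.divisors, k

/-- partitions of `n` into exactly `m` distinct parts -/
def bmn (m n : ℕ) : ℕ :=
  ((univ : Finset (Nat.Partition n)).filter fun l => l.parts.card = m ∧ l.parts.Nodup).card

/-- number of divisors of `m` that are ≤ N -/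
def g (m N : ℕ) : ℕ := (m.divisors.filter fun e => e ≤ N).card

/-- `p(k)` minus the number of partitions of `k` with all parts ≤ N -/
def f (k N : ℕ) : ℕ :=
  pp k - ((univ : Finset (Nat.Partition k)).filter fun l => ∀ a ∈ l.parts, a ≤ N).card

/-- `S(n) = Σ_{k,N≥1} f(k,N) g(n−k,N)`; terms vanish for `k > n` or `N ≥ k` -/
def S (n : ℕ) : ℕ := ∑ k ∈ Icc 1 n, ∑ N ∈ Icc 1 n, f k N * g (n - k) N

/-- `(q;q)_n` -/
def qPoch (n : ℕ) : PowerSeries ℚ := ∏ k ∈ Icc 1 n, (1 - X ^ k)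

/-- `(q;q)_∞`, defined coefficient-wise (coefficients of `q^N` stabilize for `(q;q)_M`, `M ≥ N`) -/
def qInf : PowerSeries ℚ := PowerSeries.mk fun N => coeff N (qPoch N)

/-- `(q^{n+1};q)_∞`, defined coefficient-wise -/
def tailProd (n : ℕ) : PowerSeries ℚ :=
  PowerSeries.mk fun N => coeff N (∏ k ∈ Icc (n + 1) N, (1 - X ^ k))

/-- sum `Σ_{n≥0} a n` of a family of power series with `coeff N (a n) = 0` for `n > N` -/
def seriesSum (a : ℕ → PowerSeries ℚ) : PowerSeries ℚ :=
  PowerSeries.mk fun N => ∑ n ∈ range (N + 1), coeff N (a n)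

/-- double sum `Σ_{n1,n2≥1} a n1 n2`, assuming `coeff N (a n1 n2) = 0` for `n1 + n2 > N` -/
def seriesSum2 (a : ℕ → ℕ → PowerSeries ℚ) : PowerSeries ℚ :=
  PowerSeries.mk fun N => ∑ n1 ∈ Icc 1 N, ∑ n2 ∈ Icc 1 N, coeff N (a n1 n2)

/-- `Σ_{n≥1} q^n/(1−q^n)`, the generating function of `d(n)` -/
def divSum : PowerSeries ℚ := seriesSum fun n => X ^ (n + 1) * (1 - X ^ (n + 1))⁻¹

/-!
Write `F(k, N)` for the number of partitions of `k` whose largest part exceeds `N`; it is the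
coefficient of `q^k` in `1/(q;q)_∞ - 1/(q;q)_N`. Expanding `q^i/(1-q^i) = Σ_{j ≥ 1} q^{ij}`, the
coefficient of `q^M` on the left is `Σ_N Σ_{i ≤ N} Σ_j F(M - ij, N)`. Summing over `N` first,
a partition `μ` of `M - ij` is counted `sup μ - i` times. Adjoining `j` copies of the part `i`
to `μ` is a bijection onto the partitions `λ` of `M` with at least `j` parts equal to `i`, and
it does not change `sup - i`; so the coefficient is `Σ_{λ ⊢ M} Σ_{a ∈ λ} (sup λ - a)
= Σ_λ (#λ · sup λ - M)`. Finally, conjugation swaps the largest part and the number of parts,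
so `Σ_λ (sup λ)² = Σ_λ #λ²` and `Σ_λ #λ · sup λ = p₂(M) - N₂(M)/2`.
-/

@[to_additive]
theorem Finset.prod_range_succ_eq_prod_Icc {M : Type*} [CommMonoid M] (f : ℕ → M) (n : ℕ) :
    ∏ i ∈ range n, f (i + 1) = ∏ i ∈ Icc 1 n, f i := by
  rw [range_eq_Ico, Finset.prod_Ico_add', zero_add, Finset.Ico_add_one_right_eq_Icc]

theorem Multiset.sum_map_sup_tsub_add_sum (s : Multiset ℕ) :
    (s.map (s.sup - ·)).sum + s.sum = Multiset.card s * s.sup :=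
  calc (s.map (s.sup - ·)).sum + s.sum = (s.map fun a => s.sup - a + a).sum := by
        rw [Multiset.sum_map_add, Multiset.map_id']
    _ = (s.map fun _ => s.sup).sum :=
        congrArg _ <| Multiset.map_congr rfl fun a ha => tsub_add_cancel_of_le (Multiset.le_sup ha)
    _ = Multiset.card s * s.sup := by simp

theorem one_sub_mul_sum_Icc_pow {R : Type*} [CommRing R] (x : R) (n : ℕ) :
    (1 - x) * ∑ j ∈ Icc 1 n, x ^ j = x - x ^ (n + 1) := by
  induction n with
  | zero => simp
  | succ n ih => rw [Finset.sum_Icc_succ_top (by omega), mul_add, ih]; ring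

theorem mul_sub_sum_Icc_pow {R : Type*} [CommRing R] {x u : R} (hu : (1 - x) * u = 1) (n : ℕ) :
    x * u - ∑ j ∈ Icc 1 n, x ^ j = x ^ (n + 1) * u := by
  linear_combination (∑ j ∈ Icc 1 n, x ^ j) * hu - u * one_sub_mul_sum_Icc_pow x n

namespace PowerSeries

section CommRing

variable {R : Type*} [CommRing R]

theorem coeff_eq_of_X_pow_dvd_sub {A B : R⟦X⟧} {m n : ℕ} (h : X ^ m ∣ A - B) (hn : n < m) :
    coeff n A = coeff n B := by
  rw [← sub_eq_zero, ← map_sub]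
  exact X_pow_dvd_iff.mp h n hn

theorem coeff_mul_eq_of_X_pow_dvd_sub (A : R⟦X⟧) {B C : R⟦X⟧} {n : ℕ}
    (h : X ^ (n + 1) ∣ B - C) : coeff n (A * B) = coeff n (A * C) :=
  coeff_eq_of_X_pow_dvd_sub (by rw [← mul_sub]; exact dvd_mul_of_dvd_right h A) n.lt_succ_self

theorem X_pow_dvd_prod_one_sub_X_pow_sub_one {m : ℕ} {s : Finset ℕ} (hs : ∀ k ∈ s, m ≤ k) :
    (X : R⟦X⟧) ^ m ∣ ∏ k ∈ s, (1 - X ^ k) - 1 := by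
  refine Finset.prod_induction _ (fun P : R⟦X⟧ => X ^ m ∣ P - 1) (fun P Q hP hQ => ?_)
    (by simp) fun k hk => ?_
  · rw [show P * Q - 1 = (P - 1) * Q + (Q - 1) by ring]
    exact dvd_add (dvd_mul_of_dvd_left hP Q) hQ
  · rw [sub_sub_cancel_left, dvd_neg]
    exact pow_dvd_pow X (hs k hk)

end CommRing

variable {k : Type*} [Field k]

theorem X_pow_dvd_inv_sub_inv {A B : k⟦X⟧} {m : ℕ} (hA : constantCoeff A ≠ 0)
    (hB : constantCoeff B ≠ 0) (h : X ^ m ∣ A - B) : X ^ m ∣ A⁻¹ - B⁻¹ := by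
  rw [show A⁻¹ - B⁻¹ = -(A⁻¹ * B⁻¹ * (A - B)) by
      linear_combination B⁻¹ * PowerSeries.mul_inv_cancel A hA -
        A⁻¹ * PowerSeries.mul_inv_cancel B hB,
    dvd_neg]
  exact dvd_mul_of_dvd_right h _

theorem X_pow_dvd_X_pow_mul_inv_one_sub_X_pow_sub {i : ℕ} (hi : 0 < i) (n : ℕ) :
    (X : k⟦X⟧) ^ (n + 1) ∣ X ^ i * (1 - X ^ i)⁻¹ - ∑ j ∈ Icc 1 n, X ^ (i * j) := by
  have hu : (1 - X ^ i) * (1 - X ^ i)⁻¹ = (1 : k⟦X⟧) :=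
    PowerSeries.mul_inv_cancel _ (by simp [zero_pow hi.ne'])
  simp_rw [pow_mul, mul_sub_sum_Icc_pow hu, ← pow_mul]
  exact dvd_mul_of_dvd_left (pow_dvd_pow X (Nat.le_mul_of_pos_left _ hi)) _

theorem coeff_mul_X_pow_mul_inv_one_sub_X_pow (A : k⟦X⟧) {i : ℕ} (hi : 0 < i) (n : ℕ) :
    coeff n (A * (X ^ i * (1 - X ^ i)⁻¹)) = ∑ j ∈ Icc 1 n with i * j ≤ n, coeff (n - i * j) A := by
  rw [coeff_mul_eq_of_X_pow_dvd_sub A (X_pow_dvd_X_pow_mul_inv_one_sub_X_pow_sub hi n), mul_sum,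
    map_sum, sum_filter]
  simp_rw [coeff_mul_X_pow']

end PowerSeries

namespace YoungDiagram

theorem card_transpose (μ : YoungDiagram) : μ.transpose.card = μ.card := by
  simp [YoungDiagram.card, transpose]

theorem sum_rowLens (μ : YoungDiagram) : μ.rowLens.sum = μ.card := by
  rw [YoungDiagram.card, card_eq_sum_card_fiberwise (f := Prod.fst) (t := range (μ.colLen 0))
    fun c hc => mem_range.mpr ((mem_iff_lt_colLen.mp ((mem_cells c).mp hc)).trans_le
      (μ.colLen_anti 0 c.2 (Nat.zero_le _)))]
  calc μ.rowLens.sum = ∑ i ∈ range (μ.colLen 0), μ.rowLen i := by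
        rw [Finset.sum_eq_multiset_sum]; rfl
    _ = _ := sum_congr rfl fun i _ => μ.rowLen_eq_card

theorem sup_rowLens (μ : YoungDiagram) : (μ.rowLens : Multiset ℕ).sup = μ.rowLen 0 := by
  refine le_antisymm (Multiset.sup_le.mpr fun a ha => ?_) ?_
  · obtain ⟨i, -, rfl⟩ := List.mem_map.mp ha
    exact μ.rowLen_anti 0 i (Nat.zero_le i)
  · rcases Nat.eq_zero_or_pos (μ.rowLen 0) with h | h
    · rw [h]; exact Nat.zero_le _
    · apply Multiset.le_sup
      have : 0 < μ.colLen 0 := mem_iff_lt_colLen.mp (mem_iff_lt_rowLen.mpr h)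
      exact List.mem_map.mpr ⟨0, List.mem_range.mpr this, rfl⟩

end YoungDiagram

namespace Nat.Partition

variable {n : ℕ}

theorem sup_parts_le (p : n.Partition) : p.parts.sup ≤ n :=
  Multiset.sup_le.mpr fun _ => le_of_mem_parts

theorem card_parts_le (p : n.Partition) : Multiset.card p.parts ≤ n := by
  simpa [p.parts_sum] using
    Multiset.card_nsmul_le_sum (fun _ hx => p.parts_pos hx : ∀ x ∈ p.parts, 1 ≤ x)

theorem sum_parts_sup_tsub_add (p : n.Partition) :
    (p.parts.map (p.parts.sup - ·)).sum + n = Multiset.card p.parts * p.parts.sup := by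
  simpa [p.parts_sum] using Multiset.sum_map_sup_tsub_add_sum p.parts

theorem sum_map_parts_eq_sum_count_mul (p : n.Partition) (f : ℕ → ℕ) {s : Finset ℕ}
    (hs : ∀ a ∈ p.parts, a ∈ s) :
    (p.parts.map f).sum = ∑ i ∈ s, p.parts.count i * f i := by
  rw [Finset.sum_multiset_map_count]
  refine sum_subset (fun a ha => hs a (Multiset.mem_toFinset.mp ha)) fun a _ ha => ?_
  rw [Multiset.count_eq_zero.mpr (by simpa using ha), zero_smul]

def toYoungDiagram (p : n.Partition) : YoungDiagram :=
  YoungDiagram.ofRowLens (p.parts.sort (· ≥ ·)) (Multiset.pairwise_sort _ _).sortedGE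

theorem rowLens_toYoungDiagram (p : n.Partition) :
    p.toYoungDiagram.rowLens = p.parts.sort (· ≥ ·) :=
  YoungDiagram.rowLens_ofRowLens_eq_self fun _ h => p.parts_pos ((Multiset.mem_sort _).mp h)

theorem card_toYoungDiagram (p : n.Partition) : p.toYoungDiagram.card = n := by
  rw [← YoungDiagram.sum_rowLens, rowLens_toYoungDiagram, ← Multiset.sum_coe, Multiset.sort_eq,
    p.parts_sum]

def transpose (p : n.Partition) : n.Partition where
  parts := p.toYoungDiagram.transpose.rowLens
  parts_pos ha := YoungDiagram.pos_of_mem_rowLens _ _ (Multiset.mem_coe.mp ha)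
  parts_sum := by
    rw [Multiset.sum_coe, YoungDiagram.sum_rowLens, YoungDiagram.card_transpose,
      card_toYoungDiagram]

theorem toYoungDiagram_transpose (p : n.Partition) :
    p.transpose.toYoungDiagram = p.toYoungDiagram.transpose :=
  YoungDiagram.equivListRowLens.injective <| Subtype.ext <| by
    show p.transpose.toYoungDiagram.rowLens = _
    rw [rowLens_toYoungDiagram]
    exact List.mergeSort_eq_self _ (YoungDiagram.rowLens_sorted _).pairwise

theorem transpose_involutive : Function.Involutive (transpose (n := n)) := fun p => by
  ext1
  show ((p.transpose.toYoungDiagram.transpose.rowLens : List ℕ) : Multiset ℕ) = p.parts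
  rw [toYoungDiagram_transpose, YoungDiagram.transpose_transpose, rowLens_toYoungDiagram,
    Multiset.sort_eq]

theorem card_parts_transpose (p : n.Partition) :
    Multiset.card p.transpose.parts = p.parts.sup := by
  show Multiset.card (p.toYoungDiagram.transpose.rowLens : Multiset ℕ) = _
  rw [Multiset.coe_card, YoungDiagram.length_rowLens, YoungDiagram.colLen_transpose,
    ← YoungDiagram.sup_rowLens, rowLens_toYoungDiagram, Multiset.sort_eq]

theorem sum_sup_parts_eq_sum_card_parts {M : Type*} [AddCommMonoid M] (f : ℕ → M) :
    ∑ p : n.Partition, f p.parts.sup = ∑ p : n.Partition, f (Multiset.card p.parts) :=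
  calc ∑ p : n.Partition, f p.parts.sup
      = ∑ p : n.Partition, f (Multiset.card p.transpose.parts) := by
        simp_rw [card_parts_transpose]
    _ = _ := Equiv.sum_comp (transpose_involutive.toPerm _) fun p => f (Multiset.card p.parts)

theorem mul_le_of_replicate_le {p : n.Partition} {i j : ℕ} (h : Multiset.replicate j i ≤ p.parts) :
    i * j ≤ n := by
  obtain ⟨s, hs⟩ := Multiset.le_iff_exists_add.mp h
  have := congrArg Multiset.sum hs
  rw [p.parts_sum, Multiset.sum_add, Multiset.sum_replicate, smul_eq_mul] at this
  rw [Nat.mul_comm]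
  omega

def partitionWithReplicateEquiv {i j : ℕ} (hi : 1 ≤ i) (hij : i * j ≤ n) :
    {p : n.Partition // Multiset.replicate j i ≤ p.parts} ≃ (n - i * j).Partition where
  toFun p :=
    { parts := p.1.parts - Multiset.replicate j i
      parts_pos := fun ha => p.1.parts_pos (Multiset.mem_of_le (Multiset.sub_le_self _ _) ha)
      parts_sum := by
        have := congrArg Multiset.sum (tsub_add_cancel_of_le p.2)
        rw [Multiset.sum_add, Multiset.sum_replicate, smul_eq_mul, p.1.parts_sum] at this
        rw [Nat.mul_comm i j]
        omega }
  invFun q :=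
    ⟨{ parts := q.parts + Multiset.replicate j i
       parts_pos := fun ha => by
         rcases Multiset.mem_add.mp ha with ha | ha
         · exact q.parts_pos ha
         · rw [Multiset.eq_of_mem_replicate ha]; exact hi
       parts_sum := by
         rw [Multiset.sum_add, Multiset.sum_replicate, smul_eq_mul, q.parts_sum, Nat.mul_comm j i]
         omega },
      Multiset.le_add_left _ _⟩
  left_inv p := Subtype.ext <| Nat.Partition.ext <| tsub_add_cancel_of_le p.2
  right_inv q := Nat.Partition.ext <| add_tsub_cancel_right _ _

theorem sum_filter_replicate_le_sup_tsub {i j : ℕ} (hi : 1 ≤ i) (hij : i * j ≤ n) :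
    ∑ p : n.Partition with Multiset.replicate j i ≤ p.parts, (p.parts.sup - i) =
      ∑ q : (n - i * j).Partition, (q.parts.sup - i) := by
  rw [sum_subtype _ (p := fun p : n.Partition => Multiset.replicate j i ≤ p.parts) (by simp),
    ← (partitionWithReplicateEquiv hi hij).symm.sum_comp]
  refine sum_congr rfl fun q _ => ?_
  show (q.parts + Multiset.replicate j i).sup - i = q.parts.sup - i
  have : (Multiset.replicate j i).sup ≤ i :=
    Multiset.sup_le.mpr fun _ h => (Multiset.eq_of_mem_replicate h).le
  rw [Multiset.sup_add]
  omega

theorem card_filter_replicate_le (p : n.Partition) {i : ℕ} (hi : 1 ≤ i) :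
    #{j ∈ Icc 1 n | i * j ≤ n ∧ Multiset.replicate j i ≤ p.parts} = p.parts.count i := by
  have hc := mul_le_of_replicate_le (Multiset.le_count_iff_replicate_le.mp le_rfl :
    Multiset.replicate (p.parts.count i) i ≤ p.parts)
  rw [show p.parts.count i = #(Icc 1 (p.parts.count i)) by simp]
  congr 1
  ext j
  simp only [mem_filter, mem_Icc, ← Multiset.le_count_iff_replicate_le]
  constructor
  · rintro ⟨⟨hj, -⟩, -, hjc⟩
    exact ⟨hj, hjc⟩
  · rintro ⟨hj, hjc⟩
    have := Nat.mul_le_mul_left i hjc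
    have := Nat.le_mul_of_pos_left (p.parts.count i) hi
    exact ⟨⟨hj, by omega⟩, by omega, hjc⟩

theorem sum_Icc_card_filter_lt_sup {k : ℕ} (i : ℕ) {B : ℕ} (hk : k ≤ B) :
    ∑ N ∈ Icc i B, #{μ : k.Partition | N < μ.parts.sup} = ∑ μ : k.Partition, (μ.parts.sup - i) := by
  simp_rw [card_filter]
  rw [sum_comm]
  refine sum_congr rfl fun μ _ => ?_
  have := sup_parts_le μ
  rw [← card_filter, ← Nat.card_Ico]
  congr 1
  ext N
  simp only [mem_filter, mem_Icc, mem_Ico]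
  omega

theorem sum_card_filter_lt_sup_eq (n : ℕ) :
    ∑ N ∈ Icc 1 (n + 1), ∑ i ∈ Icc 1 N, ∑ j ∈ Icc 1 n with i * j ≤ n,
        #{μ : (n - i * j).Partition | N < μ.parts.sup} =
      ∑ p : n.Partition, (p.parts.map (p.parts.sup - ·)).sum := by
  rw [sum_comm' (t' := Icc 1 (n + 1)) (s' := fun i => Icc i (n + 1)) (by intros; simp; omega)]
  calc _ = ∑ i ∈ Icc 1 (n + 1), ∑ j ∈ Icc 1 n with i * j ≤ n,
          ∑ μ : (n - i * j).Partition, (μ.parts.sup - i) := by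
        refine sum_congr rfl fun i _ => ?_
        rw [sum_comm]
        exact sum_congr rfl fun j _ => sum_Icc_card_filter_lt_sup i (by omega)
    _ = ∑ i ∈ Icc 1 (n + 1), ∑ j ∈ Icc 1 n with i * j ≤ n,
          ∑ p : n.Partition with Multiset.replicate j i ≤ p.parts, (p.parts.sup - i) := by
        refine sum_congr rfl fun i hi => sum_congr rfl fun j hj => ?_
        exact (sum_filter_replicate_le_sup_tsub (mem_Icc.mp hi).1 (mem_filter.mp hj).2).symm
    _ = ∑ p : n.Partition, ∑ i ∈ Icc 1 (n + 1), p.parts.count i * (p.parts.sup - i) := by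
        rw [sum_comm]
        refine sum_congr rfl fun i hi => ?_
        rw [sum_comm' (t' := univ)
          (s' := fun p => {j ∈ Icc 1 n | i * j ≤ n ∧ Multiset.replicate j i ≤ p.parts})
          (by intros; simp [and_assoc])]
        refine sum_congr rfl fun p _ => ?_
        rw [sum_const, card_filter_replicate_le p (mem_Icc.mp hi).1, smul_eq_mul]
    _ = _ := by
        refine sum_congr rfl fun p _ => (sum_map_parts_eq_sum_count_mul p _ fun a ha => ?_).symm
        have := le_of_mem_parts ha
        have := p.parts_pos ha
        simp only [mem_Icc]
        omega

end Nat.Partition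

theorem qPoch_eq_prod_range (N : ℕ) : qPoch N = ∏ i ∈ range N, (1 - X ^ (i + 1)) :=
  (prod_range_succ_eq_prod_Icc (fun k => 1 - X ^ k) N).symm

theorem constantCoeff_qPoch (N : ℕ) : constantCoeff (qPoch N) = 1 := by
  simp [qPoch_eq_prod_range, map_prod]

open scoped PowerSeries.WithPiTopology in
theorem inv_qPoch (N : ℕ) :
    (qPoch N)⁻¹ = PowerSeries.mk fun k => (#(Nat.Partition.restricted k (· ≤ N)) : ℚ) := by
  rw [PowerSeries.inv_eq_iff_mul_eq_one (by simp [constantCoeff_qPoch]),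
    ← (Nat.Partition.hasProd_powerSeriesMk_card_restricted ℚ (· ≤ N)).tprod_eq,
    tprod_eq_prod (s := range N) (fun i hi => if_neg (by simpa using hi)), qPoch_eq_prod_range,
    ← prod_mul_distrib]
  refine prod_eq_one fun i hi => ?_
  rw [if_pos (by simpa using hi)]
  simp_rw [pow_mul]
  exact PowerSeries.WithPiTopology.tsum_pow_mul_one_sub_of_constantCoeff_eq_zero (by simp)

theorem X_pow_dvd_qPoch_sub_qPoch {m N : ℕ} (h : m ≤ N) : X ^ (m + 1) ∣ qPoch N - qPoch m := by
  have hsplit : qPoch N = qPoch m * ∏ k ∈ Ioc m N, (1 - X ^ k) := by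
    have := Finset.prod_Ioc_consecutive (fun k => (1 : ℚ⟦X⟧) - X ^ k) (Nat.zero_le m) h
    simpa only [qPoch, ← Finset.Icc_add_one_left_eq_Ioc, zero_add] using this.symm
  rw [hsplit, ← mul_sub_one]
  exact dvd_mul_of_dvd_right
    (PowerSeries.X_pow_dvd_prod_one_sub_X_pow_sub_one fun k hk => (mem_Ioc.mp hk).1) _

theorem X_pow_dvd_qInf_sub_qPoch (N : ℕ) : X ^ (N + 1) ∣ qInf - qPoch N := by
  refine PowerSeries.X_pow_dvd_iff.mpr fun m hm => ?_
  rw [map_sub, qInf, coeff_mk, sub_eq_zero]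
  exact (PowerSeries.coeff_eq_of_X_pow_dvd_sub (X_pow_dvd_qPoch_sub_qPoch (by omega))
    m.lt_succ_self).symm

theorem constantCoeff_qInf : constantCoeff qInf = 1 := by
  rw [← coeff_zero_eq_constantCoeff_apply, qInf, coeff_mk, coeff_zero_eq_constantCoeff_apply,
    constantCoeff_qPoch]

theorem coeff_inv_qPoch (k N : ℕ) :
    coeff k (qPoch N)⁻¹ = #(Nat.Partition.restricted k (· ≤ N)) := by
  rw [inv_qPoch, coeff_mk]

theorem coeff_inv_qInf (k : ℕ) : coeff k qInf⁻¹ = pp k := by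
  have h := PowerSeries.X_pow_dvd_inv_sub_inv (by simp [constantCoeff_qInf])
    (by simp [constantCoeff_qPoch]) (X_pow_dvd_qInf_sub_qPoch k)
  rw [PowerSeries.coeff_eq_of_X_pow_dvd_sub h k.lt_succ_self, coeff_inv_qPoch,
    Nat.Partition.restricted, filter_true_of_mem fun μ _ i hi => Nat.Partition.le_of_mem_parts hi,
    card_univ, pp]

theorem coeff_inv_qInf_sub_inv_qPoch (k N : ℕ) :
    coeff k (qInf⁻¹ - (qPoch N)⁻¹) = #{μ : k.Partition | N < μ.parts.sup} := by
  rw [map_sub, coeff_inv_qInf, coeff_inv_qPoch, pp, ← card_univ,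
    ← card_filter_add_card_filter_not (fun μ : k.Partition => ∀ i ∈ μ.parts, i ≤ N)]
  simp_rw [Nat.Partition.restricted, ← Multiset.sup_le, not_le, Nat.cast_add, add_sub_cancel_left]

theorem coeff_inv_qInf_sub_inv_qPoch_mul_sum (M N : ℕ) :
    coeff M ((qInf⁻¹ - (qPoch N)⁻¹) * ∑ i ∈ Icc 1 N, X ^ i * (1 - X ^ i)⁻¹) =
      ∑ i ∈ Icc 1 N, ∑ j ∈ Icc 1 M with i * j ≤ M,
        (#{μ : (M - i * j).Partition | N < μ.parts.sup} : ℚ) := by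
  rw [mul_sum, map_sum]
  refine sum_congr rfl fun i hi => ?_
  rw [PowerSeries.coeff_mul_X_pow_mul_inv_one_sub_X_pow _ (mem_Icc.mp hi).1]
  simp_rw [coeff_inv_qInf_sub_inv_qPoch]

theorem p2_eq_sum_card_sq (n : ℕ) : p2 n = ∑ p : n.Partition, Multiset.card p.parts ^ 2 := by
  rw [p2, ← sum_fiberwise_of_maps_to' (g := fun p : n.Partition => Multiset.card p.parts)
    (f := (· ^ 2)) fun p _ => mem_range.mpr (Nat.lt_succ_of_le p.card_parts_le)]
  refine sum_congr rfl fun m _ => ?_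
  rw [pmn, sum_const, smul_eq_mul, mul_comm]

theorem N2_eq_sum_rank_sq (n : ℕ) : N2 n = ∑ p : n.Partition, rank p ^ 2 := by
  rw [N2, ← sum_fiberwise_of_maps_to' (g := rank) (t := Icc (-(n : ℤ)) n) (f := (· ^ 2))
    fun p _ => by
      have := p.sup_parts_le
      have := p.card_parts_le
      rw [mem_Icc, rank]
      omega]
  refine sum_congr rfl fun m _ => ?_
  rw [Nrank, sum_const, nsmul_eq_mul, mul_comm]

theorem sum_sum_parts_sup_tsub_eq (n : ℕ) :
    ((∑ p : n.Partition, (p.parts.map (p.parts.sup - ·)).sum : ℕ) : ℚ) =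
      p2 n - n * pp n - N2 n / 2 := by
  have hpart (p : n.Partition) : (((p.parts.map (p.parts.sup - ·)).sum : ℕ) : ℚ) =
      Multiset.card p.parts * p.parts.sup - n := by
    rw [eq_sub_iff_add_eq]
    exact_mod_cast p.sum_parts_sup_tsub_add
  have hsq := Nat.Partition.sum_sup_parts_eq_sum_card_parts (n := n) fun m => (m : ℚ) ^ 2
  have hmul : ∑ p : n.Partition, 2 * (p.parts.sup : ℚ) * Multiset.card p.parts =
      2 * ∑ p : n.Partition, (Multiset.card p.parts : ℚ) * p.parts.sup := by
    rw [mul_sum]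
    exact sum_congr rfl fun _ _ => by ring
  rw [Nat.cast_sum, sum_congr rfl fun p _ => hpart p, p2_eq_sum_card_sq, N2_eq_sum_rank_sq, pp]
  simp only [rank]
  push_cast
  simp only [sub_sq, sum_add_distrib, sum_sub_distrib, sum_const, card_univ, hsq, hmul,
    nsmul_eq_mul]
  ring

/-- Σ_{n≥1} (1/(q;q)_∞ − 1/(q;q)_n) Σ_{i=1}^n q^i/(1−q^i)
      = Σ_{n≥1} (p₂(n) − n p(n) − N₂(n)/2) qⁿ. -/
theorem stmt12 :
    seriesSum (fun n => (qInf⁻¹ - (qPoch (n + 1))⁻¹) *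
        ∑ i ∈ Icc 1 (n + 1), X ^ i * (1 - X ^ i)⁻¹) =
      PowerSeries.mk fun n => (p2 n : ℚ) - n * pp n - (N2 n : ℚ) / 2 := by
  ext M
  rw [seriesSum, coeff_mk, coeff_mk, ← sum_sum_parts_sup_tsub_eq,
    ← Nat.Partition.sum_card_filter_lt_sup_eq, ← sum_range_succ_eq_sum_Icc]
  push_cast
  simp_rw [coeff_inv_qInf_sub_inv_qPoch_mul_sum]
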